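/- arXiv:1107.3043 — 2 statements merged into one kernel-verified Lean document; each statement's English description precedes it below -/
import Mathlib

section
/- Let G be a topological group, Γ a dense subgroup of G, and K' ≤ K subgroups of G such that both K and K' are open in G. Then the index of Γ ∩ K' in Γ ∩ K equals the index of K' in K; i.e., the relative index [Γ ∩ K : Γ ∩ K'] = [K : K']. -/
/-! The inclusion `Γ ∩ K → K` always induces an injection on left cosets of `K'`. It is
surjective because each coset `k K'` is open, hence meets the dense subgroup `Γ`, and any
such meeting point lies in `K`. -/

open scoped Pointwise

namespace Subgroup

variable {α : Type*} [Group α]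

theorem relIndex_eq_of_le_of_forall_exists_inv_mul_mem {H L K : Subgroup α} (hLK : L ≤ K)
    (hcoset : ∀ k ∈ K, ∃ l ∈ L, l⁻¹ * k ∈ H) : H.relIndex L = H.relIndex K := by
  refine Nat.card_congr <| Equiv.ofBijective (quotientSubgroupOfEmbeddingOfLE H hLK)
    ⟨(quotientSubgroupOfEmbeddingOfLE H hLK).injective, ?_⟩
  rintro ⟨k, hk⟩
  obtain ⟨l, hl, hlk⟩ := hcoset k hk
  exact ⟨QuotientGroup.mk ⟨l, hl⟩, QuotientGroup.eq.mpr hlk⟩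

end Subgroup

theorem Dense.exists_inv_mul_mem_of_isOpen {G : Type*} [Group G] [TopologicalSpace G]
    [SeparatelyContinuousMul G] {Γ H : Subgroup G} (hΓ : Dense (Γ : Set G))
    (hH : IsOpen (H : Set G)) (x : G) : ∃ γ ∈ Γ, γ⁻¹ * x ∈ H := by
  obtain ⟨_, ⟨h, hh, rfl⟩, hxh⟩ :=
    hΓ.inter_open_nonempty (x • (H : Set G)) (hH.leftCoset x) ⟨x, 1, H.one_mem, mul_one x⟩
  exact ⟨x * h, hxh, by simpa using H.inv_mem hh⟩

theorem relindex_inter_of_dense_of_open_general {G : Type*} [Group G] [TopologicalSpace G]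
    [IsTopologicalGroup G] (Γ K K' : Subgroup G)
    (hΓ : Dense (Γ : Set G)) (hK' : IsOpen (K' : Set G))
    (hle : K' ≤ K) :
    (Γ ⊓ K').relIndex (Γ ⊓ K) = K'.relIndex K := by
  rw [show Γ ⊓ K' = K' ⊓ (Γ ⊓ K) by rw [inf_left_comm, inf_of_le_left hle],
    Subgroup.inf_relIndex_right]
  refine Subgroup.relIndex_eq_of_le_of_forall_exists_inv_mul_mem inf_le_right fun k hk ↦ ?_
  obtain ⟨γ, hγΓ, hγk⟩ := hΓ.exists_inv_mul_mem_of_isOpen hK' k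
  have hγK : γ ∈ K := by simpa using K.mul_mem hk (K.inv_mem (hle hγk))
  exact ⟨γ, ⟨hγΓ, hγK⟩, hγk⟩

/-- If `Γ` is a dense subgroup of a topological group `G` and `K' ≤ K` are open
subgroups of `G`, then the relative index `[Γ ∩ K : Γ ∩ K']` equals `[K : K']`. -/
theorem relindex_inter_of_dense_of_open {G : Type*} [Group G] [TopologicalSpace G]
    [IsTopologicalGroup G] (Γ K K' : Subgroup G)
    (hΓ : Dense (Γ : Set G)) (hK : IsOpen (K : Set G)) (hK' : IsOpen (K' : Set G))
    (hle : K' ≤ K) :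
    (Γ ⊓ K').relIndex (Γ ⊓ K) = K'.relIndex K :=
  relindex_inter_of_dense_of_open_general Γ K K' hΓ hK' hle
end

section
/- Let p be a prime and n ≥ 1. Every element of finite order in the kernel of the reduction homomorphism SL_n(ℤ_p) → SL_n(ℤ/pℤ) has order a power of p. Here ℤ_p denotes the ring of p-adic integers and the map is induced by the residue ring homomorphism ℤ_p → ℤ/pℤ. -/
open Finset

variable {p : ℕ} [Fact p.Prime] {n : ℕ}

lemma entry_norm_mul_le (M N : Matrix (Fin n) (Fin n) ℤ_[p]) {a b : ℝ}
    (ha0 : 0 ≤ a) (hb : 0 ≤ b)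
    (ha : ∀ i j, ‖M i j‖ ≤ a) (hbN : ∀ i j, ‖N i j‖ ≤ b) :
    ∀ i j, ‖(M * N) i j‖ ≤ a * b := by
  intro i j
  rw [Matrix.mul_apply]
  refine IsUltrametricDist.norm_sum_le_of_forall_le_of_nonneg (mul_nonneg ha0 hb) fun k _ => ?_
  rw [norm_mul]
  exact mul_le_mul (ha i k) (hbN k j) (norm_nonneg _) ha0

lemma entry_norm_pow_le (M : Matrix (Fin n) (Fin n) ℤ_[p]) {a : ℝ}
    (ha0 : 0 ≤ a) (ha : ∀ i j, ‖M i j‖ ≤ a) (k : ℕ) :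
    ∀ i j, ‖(M ^ (k + 1)) i j‖ ≤ a ^ (k + 1) := by
  induction k with
  | zero => simpa using ha
  | succ m ih =>
    intro i j
    have := entry_norm_mul_le (M ^ (m + 1)) M (pow_nonneg ha0 _) ha0 ih ha i j
    rw [← pow_succ] at this
    exact this.trans_eq (by ring)

lemma key_lemma (A : Matrix.SpecialLinearGroup (Fin n) ℤ_[p]) (hn : 1 ≤ n)
    (hA : ∀ i j, ‖(A.val - 1) i j‖ ≤ (p : ℝ)⁻¹) (q : ℕ) (hq : q.Prime) (hqp : q ≠ p)
    (hAq : A ^ q = 1) : A = 1 := by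
  set M : Matrix (Fin n) (Fin n) ℤ_[p] := A.val - 1 with hM
  have hcomm : Commute M 1 := Commute.one_right M
  have hexp : (M + 1) ^ q = ∑ k ∈ range (q + 1), M ^ k * 1 ^ (q - k) * (q.choose k : Matrix (Fin n) (Fin n) ℤ_[p]) := hcomm.add_pow q
  have hA1 : (M + 1) ^ q = 1 := by
    have : A.val ^ q = 1 := by
      have := Subtype.ext_iff.mp hAq
      simpa using this
    rw [hM]; simpa using this
  -- split the sum
  have hq2 : 2 ≤ q := hq.two_le
  set f : ℕ → Matrix (Fin n) (Fin n) ℤ_[p] := fun k => M ^ k * (q.choose k : Matrix (Fin n) (Fin n) ℤ_[p]) with hf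
  have hsum : (1 : Matrix (Fin n) (Fin n) ℤ_[p]) = ∑ k ∈ range (q + 1), f k := by
    rw [← hA1, hexp]
    simp [hf]
  obtain ⟨q', rfl⟩ : ∃ q', q = q' + 2 := ⟨q - 2, by omega⟩
  rw [show q' + 2 + 1 = (q' + 1) + 1 + 1 from rfl, Finset.sum_range_succ',
    Finset.sum_range_succ'] at hsum
  have hf0 : f 0 = 1 := by simp [hf]
  have hf1 : f 1 = M * ((q' + 2 : ℕ) : Matrix (Fin n) (Fin n) ℤ_[p]) := by
    simp [hf]
  set S : Matrix (Fin n) (Fin n) ℤ_[p] := ∑ i ∈ range (q' + 1), f (i + 1 + 1) with hS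
  have hMq : M * ((q' + 2 : ℕ) : Matrix (Fin n) (Fin n) ℤ_[p]) = -S := by
    rw [hf0, hf1] at hsum
    linear_combination (norm := abel) -hsum
  -- norms
  have hp1 : 1 < (p : ℝ) := by exact_mod_cast (Fact.out : p.Prime).one_lt
  have : Nonempty (Fin n) := ⟨⟨0, hn⟩⟩
  have hne : (univ : Finset (Fin n × Fin n)).Nonempty := univ_nonempty
  set r : ℝ := (univ : Finset (Fin n × Fin n)).sup' hne (fun ij => ‖M ij.1 ij.2‖) with hr
  have hrle : ∀ i j, ‖M i j‖ ≤ r := fun i j =>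
    Finset.le_sup' (fun ij : Fin n × Fin n => ‖M ij.1 ij.2‖) (mem_univ (i, j))
  have hr0 : 0 ≤ r := (norm_nonneg _).trans (hrle ⟨0, hn⟩ ⟨0, hn⟩)
  have hrinv : r ≤ (p : ℝ)⁻¹ := by
    obtain ⟨b, -, hb⟩ := Finset.exists_mem_eq_sup' hne (fun ij : Fin n × Fin n => ‖M ij.1 ij.2‖)
    rw [hr, hb]
    exact hA b.1 b.2
  have hrlt1 : r < 1 := lt_of_le_of_lt hrinv (inv_lt_one_of_one_lt₀ hp1)
  have hSb : ∀ i j, ‖S i j‖ ≤ r * r := by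
    intro i j
    rw [hS, Matrix.sum_apply]
    refine IsUltrametricDist.norm_sum_le_of_forall_le_of_nonneg (mul_nonneg hr0 hr0) fun k _ => ?_
    have h1 : ‖(f (k + 1 + 1)) i j‖ ≤ r ^ (k + 1 + 1) * 1 := by
      refine entry_norm_mul_le _ _ (pow_nonneg hr0 _) zero_le_one
        (entry_norm_pow_le M hr0 hrle (k + 1)) (fun a b => PadicInt.norm_le_one _) i j
    have h2 : r ^ (k + 1 + 1) ≤ r ^ 2 := pow_le_pow_of_le_one hr0 hrlt1.le (by omega)
    calc ‖(f (k + 1 + 1)) i j‖ ≤ r ^ (k + 1 + 1) * 1 := h1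
      _ = r ^ (k + 1 + 1) := mul_one _
      _ ≤ r ^ 2 := h2
      _ = r * r := sq r
  have hqnorm : ‖((q' + 2 : ℕ) : ℤ_[p])‖ = 1 := by
    refine le_antisymm (PadicInt.norm_le_one _) ?_
    by_contra hlt
    push_neg at hlt
    have : ((q' + 2 : ℕ) : ℤ_[p]) = (((q' + 2 : ℕ) : ℤ) : ℤ_[p]) := by push_cast; ring
    rw [this, PadicInt.norm_int_lt_one_iff_dvd] at hlt
    have hpq : p ∣ q' + 2 := by exact_mod_cast hlt
    exact hqp ((Nat.prime_dvd_prime_iff_eq (Fact.out : p.Prime) hq).mp hpq).symm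
  have hMsmall : ∀ i j, ‖M i j‖ ≤ r * r := by
    intro i j
    have hentry : ((q' + 2 : ℕ) : ℤ_[p]) * M i j = -(S i j) := by
      have h1 : (M * ((q' + 2 : ℕ) : Matrix (Fin n) (Fin n) ℤ_[p])) i j = -(S i j) := by
        rw [hMq]; simp
      rw [← (Nat.cast_commute ((q' + 2 : ℕ)) M).eq, ← nsmul_eq_mul] at h1
      simpa [Matrix.smul_apply, nsmul_eq_mul] using h1
    calc ‖M i j‖ = ‖((q' + 2 : ℕ) : ℤ_[p]) * M i j‖ := by rw [norm_mul, hqnorm, one_mul]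
      _ = ‖-(S i j)‖ := by rw [hentry]
      _ = ‖S i j‖ := norm_neg _
      _ ≤ r * r := hSb i j
  have hrr : r ≤ r * r := by
    refine Finset.sup'_le hne _ fun ij _ => hMsmall ij.1 ij.2
  have hrzero : r = 0 := by
    rcases hr0.lt_or_eq with hpos | h0
    · exfalso
      have : r * r < r * 1 := mul_lt_mul_of_pos_left hrlt1 hpos
      rw [mul_one] at this
      exact absurd (hrr.trans_lt this) (lt_irrefl r)
    · exact h0.symm
  have hMzero : M = 0 := by
    ext i j
    have : ‖M i j‖ ≤ 0 := hrzero ▸ hrle i j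
    simpa using le_antisymm this (norm_nonneg _)
  have : A.val = 1 := by
    have := hMzero
    rw [hM, sub_eq_zero] at this
    exact this
  exact Subtype.ext this

lemma ker_entry_norm (X : Matrix.SpecialLinearGroup (Fin n) ℤ_[p])
    (hX : X ∈ (Matrix.SpecialLinearGroup.map (n := Fin n) (PadicInt.toZMod (p := p))).ker) :
    ∀ i j, ‖(X.val - 1) i j‖ ≤ (p : ℝ)⁻¹ := by
  intro i j
  have hX1 : Matrix.SpecialLinearGroup.map (n := Fin n) (PadicInt.toZMod (p := p)) X = 1 :=
    hX
  have hmat : (X.val).map (PadicInt.toZMod (p := p)) = 1 := by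
    have := Subtype.ext_iff.mp hX1
    simpa [Matrix.SpecialLinearGroup.map_apply_coe, RingHom.mapMatrix_apply] using this
  have hzero : PadicInt.toZMod ((X.val - 1) i j) = 0 := by
    have h1 : PadicInt.toZMod (X.val i j) = (1 : Matrix (Fin n) (Fin n) (ZMod p)) i j := by
      rw [← hmat]; rfl
    have h2 : PadicInt.toZMod ((1 : Matrix (Fin n) (Fin n) ℤ_[p]) i j)
        = (1 : Matrix (Fin n) (Fin n) (ZMod p)) i j := by
      by_cases h : i = j
      · subst h; simp
      · simp [Matrix.one_apply_ne h]
    simp only [Matrix.sub_apply, map_sub, h1, h2, sub_self]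
  have hdvd : (p : ℤ_[p]) ∣ (X.val - 1) i j := by
    have : (X.val - 1) i j ∈ RingHom.ker (PadicInt.toZMod (p := p)) := hzero
    rw [PadicInt.ker_toZMod, PadicInt.maximalIdeal_eq_span_p, Ideal.mem_span_singleton] at this
    exact this
  obtain ⟨y, hy⟩ := hdvd
  rw [hy, norm_mul, PadicInt.norm_p]
  calc (p : ℝ)⁻¹ * ‖y‖ ≤ (p : ℝ)⁻¹ * 1 := by
        refine mul_le_mul_of_nonneg_left (PadicInt.norm_le_one y) (by positivity)
    _ = (p : ℝ)⁻¹ := mul_one _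

/-- For a prime `p` and `n ≥ 1`, every element of finite order in the kernel of
the reduction homomorphism `SL_n(ℤ_p) → SL_n(ℤ/pℤ)` has order a power of `p`. -/
theorem orderOf_ker_reduction_SL_padic (p : ℕ) [Fact p.Prime] (n : ℕ) (hn : 1 ≤ n) :
    ∀ A : Matrix.SpecialLinearGroup (Fin n) ℤ_[p],
      A ∈ (Matrix.SpecialLinearGroup.map (n := Fin n) (PadicInt.toZMod (p := p))).ker →
      IsOfFinOrder A → ∃ k : ℕ, orderOf A = p ^ k := by
  intro A hker hfin
  set m := orderOf A with hm
  have hm0 : m ≠ 0 := hfin.orderOf_pos.ne'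
  have huniq : ∀ {q : ℕ}, q.Prime → q ∣ m → q = p := by
    intro q hq hqm
    by_contra hqp
    set B := A ^ (m / q) with hB
    have hBker : B ∈ (Matrix.SpecialLinearGroup.map (n := Fin n)
        (PadicInt.toZMod (p := p))).ker := pow_mem hker _
    have hordB : orderOf B = q := by
      have hd0 : m / q ≠ 0 := by
        have := Nat.div_pos (Nat.le_of_dvd (Nat.pos_of_ne_zero hm0) hqm) hq.pos
        omega
      rw [hB, orderOf_pow' A hd0]
      rw [← hm, Nat.gcd_eq_right (Nat.div_dvd_of_dvd hqm), Nat.div_div_self hqm hm0]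
    have hBq : B ^ q = 1 := by
      rw [← hordB]; exact pow_orderOf_eq_one B
    have hB1 : B = 1 := key_lemma B hn (ker_entry_norm B hBker) q hq hqp hBq
    rw [hB1, orderOf_one] at hordB
    exact hq.one_lt.ne hordB
  exact ⟨_, Nat.eq_prime_pow_of_unique_prime_dvd hm0 huniq⟩
end
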